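/- Let (aₜ)_{t=0}^{T-1} and (bₜ)_{t=0}^{T-1} be nonnegative reals, c ≥ 0, r ∈ [0,1), τ ≥ 0, and suppose for every t, aₜ ≤ ∑_{j=0}^{t-τ-1} bⱼ·(r^{t-τ-1-j} + 2(t-τ-1-j)·r^{(t-τ-1-j)/2}) + c. Then (1/T)∑_{t=0}^{T-1} aₜ ≤ (1/(1-r) + 4√r/(1-√r)²)·(1/T)∑_{t=0}^{T-1} bₜ + c. -/
import Mathlib

theorem summation_lemma (T : ℕ) (hT : 0 < T) (a b : ℕ → ℝ)
    (ha : ∀ t, 0 ≤ a t) (hb : ∀ t, 0 ≤ b t)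
    (c r : ℝ) (hc : 0 ≤ c) (hr : r ∈ Set.Ico (0 : ℝ) 1) (τ : ℕ)
    (h : ∀ t < T, a t ≤ (∑ j ∈ Finset.range (t - τ),
        b j * (r ^ (t - τ - 1 - j) + 2 * ((t - τ - 1 - j : ℕ) : ℝ)
            * Real.sqrt r ^ (t - τ - 1 - j))) + c) :
    (1 / (T : ℝ)) * ∑ t ∈ Finset.range T, a t
      ≤ (1 / (1 - r) + 4 * Real.sqrt r / (1 - Real.sqrt r) ^ 2)
          * ((1 / (T : ℝ)) * ∑ t ∈ Finset.range T, b t) + c := by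
  obtain ⟨hr0, hr1⟩ := hr
  set s := Real.sqrt r with hs
  have hs0 : 0 ≤ s := Real.sqrt_nonneg r
  have hs1 : s < 1 := by
    have := Real.sqrt_lt_sqrt hr0 hr1
    simpa [hs, Real.sqrt_one] using this
  set w : ℕ → ℝ := fun k => r ^ k + 2 * (k : ℝ) * s ^ k with hw
  have hwnn : ∀ k, 0 ≤ w k := fun k => by
    simp only [hw]; positivity
  set K : ℝ := 1 / (1 - r) + 4 * s / (1 - s) ^ 2 with hK
  -- partial sums of w are bounded by K
  have hA : ∀ n : ℕ, ∑ k ∈ Finset.range n, w k ≤ K := by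
    intro n
    have hsum1 : Summable (fun k : ℕ => r ^ k) :=
      summable_geometric_of_lt_one hr0 hr1
    have hns : ‖s‖ < 1 := by rwa [Real.norm_of_nonneg hs0]
    have hsum2 : Summable (fun k : ℕ => (k : ℝ) * s ^ k) :=
      (hasSum_coe_mul_geometric_of_norm_lt_one hns).summable
    have h1 : ∑ k ∈ Finset.range n, r ^ k ≤ 1 / (1 - r) := by
      have := Summable.sum_le_tsum (Finset.range n) (fun k _ => pow_nonneg hr0 k) hsum1
      rwa [tsum_geometric_of_lt_one hr0 hr1, ← one_div] at this
    have h2 : ∑ k ∈ Finset.range n, (k : ℝ) * s ^ k ≤ s / (1 - s) ^ 2 := by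
      have := Summable.sum_le_tsum (Finset.range n) (fun k _ => by positivity) hsum2
      rwa [tsum_coe_mul_geometric_of_norm_lt_one hns] at this
    have hsplit : ∑ k ∈ Finset.range n, w k
        = (∑ k ∈ Finset.range n, r ^ k)
          + 2 * ∑ k ∈ Finset.range n, (k : ℝ) * s ^ k := by
      rw [Finset.mul_sum, ← Finset.sum_add_distrib]
      exact Finset.sum_congr rfl fun k _ => by simp only [hw]; ring
    have h3 : 2 * (s / (1 - s) ^ 2) ≤ 4 * s / (1 - s) ^ 2 := by
      have hp : 0 ≤ s / (1 - s) ^ 2 := by positivity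
      rw [mul_div_assoc]
      linarith
    calc ∑ k ∈ Finset.range n, w k
        = (∑ k ∈ Finset.range n, r ^ k)
          + 2 * ∑ k ∈ Finset.range n, (k : ℝ) * s ^ k := hsplit
      _ ≤ 1 / (1 - r) + 2 * (s / (1 - s) ^ 2) := by gcongr
      _ ≤ K := by rw [hK]; linarith
  have hK0 : 0 ≤ K := le_trans (by simp) (hA 0)
  -- the double sum bound via swapping summation order
  have hD : ∑ t ∈ Finset.range T, ∑ j ∈ Finset.range (t - τ),
      b j * w (t - τ - 1 - j) ≤ K * ∑ j ∈ Finset.range T, b j := by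
    have hrw : ∀ t ∈ Finset.range T,
        ∑ j ∈ Finset.range (t - τ), b j * w (t - τ - 1 - j)
          = ∑ j ∈ Finset.range T,
              (if τ + j < t then b j * w (t - τ - 1 - j) else 0) := by
      intro t ht
      rw [Finset.mem_range] at ht
      rw [Finset.sum_ite, Finset.sum_const_zero, add_zero]
      apply Finset.sum_congr
      · ext j
        simp only [Finset.mem_filter, Finset.mem_range]
        omega
      · intro j _; rfl
    rw [Finset.sum_congr rfl hrw, Finset.sum_comm]
    have hj : ∀ j ∈ Finset.range T,
        ∑ t ∈ Finset.range T, (if τ + j < t then b j * w (t - τ - 1 - j) else 0)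
          ≤ K * b j := by
      intro j _
      have : ∑ t ∈ Finset.range T,
          (if τ + j < t then b j * w (t - τ - 1 - j) else 0)
            = b j * ∑ k ∈ Finset.range (T - (τ + j + 1)), w k := by
        rw [Finset.mul_sum]
        rw [Finset.sum_ite, Finset.sum_const_zero, add_zero]
        have hfe : (Finset.range T).filter (fun t => τ + j < t)
            = Finset.Ico (τ + j + 1) T := by
          ext t
          simp only [Finset.mem_filter, Finset.mem_range, Finset.mem_Ico]
          omega
        rw [hfe, Finset.sum_Ico_eq_sum_range]
        apply Finset.sum_congr rfl
        intro k _
        have he : τ + j + 1 + k - τ - 1 - j = k := by omega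
        rw [he]
      rw [this]
      calc b j * ∑ k ∈ Finset.range (T - (τ + j + 1)), w k
          ≤ b j * K := by
            apply mul_le_mul_of_nonneg_left (hA _) (hb j)
        _ = K * b j := mul_comm _ _
    calc ∑ j ∈ Finset.range T, ∑ t ∈ Finset.range T,
          (if τ + j < t then b j * w (t - τ - 1 - j) else 0)
        ≤ ∑ j ∈ Finset.range T, K * b j := Finset.sum_le_sum hj
      _ = K * ∑ j ∈ Finset.range T, b j := by rw [Finset.mul_sum]
  -- assemble
  have hsum : ∑ t ∈ Finset.range T, a t
      ≤ K * (∑ j ∈ Finset.range T, b j) + T * c := by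
    calc ∑ t ∈ Finset.range T, a t
        ≤ ∑ t ∈ Finset.range T, ((∑ j ∈ Finset.range (t - τ),
            b j * w (t - τ - 1 - j)) + c) := by
          apply Finset.sum_le_sum
          intro t ht
          rw [Finset.mem_range] at ht
          exact h t ht
      _ = (∑ t ∈ Finset.range T, ∑ j ∈ Finset.range (t - τ),
            b j * w (t - τ - 1 - j)) + T * c := by
          rw [Finset.sum_add_distrib, Finset.sum_const, Finset.card_range,
            nsmul_eq_mul]
      _ ≤ K * (∑ j ∈ Finset.range T, b j) + T * c := by linarith
  have hT0 : (0:ℝ) < T := by exact_mod_cast hT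
  rw [one_div, inv_mul_le_iff₀ hT0]
  calc ∑ t ∈ Finset.range T, a t
      ≤ K * (∑ j ∈ Finset.range T, b j) + T * c := hsum
    _ = (T:ℝ) * (K * ((T:ℝ)⁻¹ * ∑ t ∈ Finset.range T, b t) + c) := by
        field_simp
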